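/- Under the Dijkstra invariants, every shortest path from s to an incorrect fringe vertex v (one with d[v] > dist(s,v)) must end with an edge (w,v) where w ∈ F ∪ U. -/

import Mathlib

open scoped ENNReal Classical
open Set

variable {V : Type*}

/-- Cost of a path (list of vertices): sum of edge costs of consecutive pairs. -/
noncomputable def pathCost (c : V → V → NNReal) (l : List V) : ℝ≥0∞ :=
  ((l.zip l.tail).map fun p => (c p.1 p.2 : ℝ≥0∞)).sum

/-- `l` is a path from `s` to `v` following edges of `E`. -/
def IsPath (E : V → V → Prop) (s v : V) (l : List V) : Prop :=
  l.head? = some s ∧ l.getLast? = some v ∧ l.Chain' E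

/-- A path from `s` to `v` all of whose intermediate vertices lie in `S`. -/
def IsSPath (E : V → V → Prop) (S : Set V) (s v : V) (l : List V) : Prop :=
  IsPath E s v l ∧ ∀ x ∈ l.dropLast.tail, x ∈ S

/-- Shortest-path distance from `s` to `v` (`∞` if unreachable). -/
noncomputable def gdist (E : V → V → Prop) (c : V → V → NNReal) (s v : V) : ℝ≥0∞ :=
  ⨅ l ∈ {l | IsPath E s v l}, pathCost c l

/-- Shortest distance from `s` to `v` over paths with intermediates in `S`. -/
noncomputable def sdist (E : V → V → Prop) (c : V → V → NNReal) (S : Set V) (s v : V) : ℝ≥0∞ :=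
  ⨅ l ∈ {l | IsSPath E S s v l}, pathCost c l

/-- The invariants of Dijkstra's algorithm for the partition `(S, F, U)` of the
vertex set with tentative distances `d`. -/
lemma pathCost_singleton (c : V → V → NNReal) (a : V) : pathCost c [a] = 0 := rfl

lemma pathCost_cons_cons (c : V → V → NNReal) (a b : V) (t : List V) :
    pathCost c (a :: b :: t) = (c a b : ℝ≥0∞) + pathCost c (b :: t) := rfl

lemma pathCost_append_single (c : V → V → NNReal) :
    ∀ (m : List V) (w v : V), m.getLast? = some w →
      pathCost c (m ++ [v]) = pathCost c m + c w v
  | [], w, v, h => by simp at h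
  | [a], w, v, h => by
      simp only [List.getLast?_singleton, Option.some.injEq] at h
      subst h
      simp [pathCost_singleton, pathCost_cons_cons]
  | a :: b :: t, w, v, h => by
      have h' : (b :: t).getLast? = some w := by
        rw [List.getLast?_cons_cons] at h; exact h
      have ih := pathCost_append_single c (b :: t) w v h'
      simp only [List.cons_append, pathCost_cons_cons] at *
      rw [ih, add_assoc]

lemma mem_dropLast_or_eq (l : List V) (w : V) (h : l.getLast? = some w) :
    ∀ x ∈ l, x ∈ l.dropLast ∨ x = w := by
  obtain ⟨p, rfl⟩ := List.getLast?_eq_some_iff.mp h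
  intro x hx
  rw [List.dropLast_concat]
  simpa using hx

lemma mem_tail_of_getLast (l : List V) (w : V) (h : l.getLast? = some w) :
    ∀ x ∈ l.tail, x ∈ l.dropLast.tail ∨ x = w := by
  rcases l with _ | ⟨a, t⟩
  · simp
  · rcases t with _ | ⟨b, t'⟩
    · simp
    · intro x hx
      simp only [List.tail_cons] at hx ⊢
      have h' : (b :: t').getLast? = some w := by
        rw [List.getLast?_cons_cons] at h; exact h
      rcases mem_dropLast_or_eq (b :: t') w h' x hx with h2 | rfl
      · left
        rwa [List.dropLast_cons_of_ne_nil (by simp)]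
      · right; rfl

lemma gdist_le_pathCost (E : V → V → Prop) (c : V → V → NNReal) (s v : V)
    (l : List V) (hl : IsPath E s v l) : gdist E c s v ≤ pathCost c l :=
  iInf₂_le l hl

lemma sdist_le_pathCost (E : V → V → Prop) (c : V → V → NNReal) (S : Set V) (s v : V)
    (l : List V) (hl : IsSPath E S s v l) : sdist E c S s v ≤ pathCost c l :=
  iInf₂_le l hl

structure DijkstraInv (E : V → V → Prop) (c : V → V → NNReal) (s : V)
    (S F U : Set V) (d : V → ℝ≥0∞) : Prop where
  cover : S ∪ F ∪ U = univ
  disjSF : Disjoint S F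
  disjSU : Disjoint S U
  disjFU : Disjoint F U
  settled : ∀ u ∈ S, d u = gdist E c s u
  settledPath : ∀ u ∈ S, ∃ l, IsSPath E S s u l ∧ pathCost c l = d u
  fringe : ∀ u ∈ F, d u = sdist E c S s u ∧ ∃ l, IsSPath E S s u l
  unexplored : ∀ u ∈ U, ¬ ∃ l, IsSPath E S s u l
/-- Every shortest path from `s` to an incorrect fringe vertex `v` ends with an
edge `(w, v)` with `w ∈ F ∪ U`. -/
theorem shortest_path_to_incorrect_ends_in_FU (E : V → V → Prop) (c : V → V → NNReal)
    (s : V) (S F U : Set V) (d : V → ℝ≥0∞) (hinv : DijkstraInv E c s S F U d)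
    (v : V) (hv : v ∈ F) (hincorrect : gdist E c s v < d v) :
    ∀ l : List V, IsPath E s v l → pathCost c l = gdist E c s v →
      ∃ (l' : List V) (w : V), l = l' ++ [w, v] ∧ w ∈ F ∪ U := by
  intro l hl hcost
  obtain ⟨hhead, hlast, hchain⟩ := hl
  have hsd : d v = sdist E c S s v := (hinv.fringe v hv).1
  -- l ends in v
  obtain ⟨p, rfl⟩ : ∃ p, l = p ++ [v] := by
    rcases List.getLast?_eq_some_iff.mp hlast with ⟨p, hp⟩
    exact ⟨p, hp⟩
  rcases p.eq_nil_or_concat with rfl | ⟨m, w, rfl⟩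
  · -- l = [v] : then s = v and [v] is an S-path, contradiction
    exfalso
    simp only [List.nil_append, List.head?_cons] at hhead
    have hsp : IsSPath E S s v [v] := by
      refine ⟨⟨by simpa using hhead, by simp, List.isChain_singleton v⟩, by simp⟩
    have h1 := sdist_le_pathCost E c S s v [v] hsp
    rw [← hcost] at hincorrect
    exact absurd (lt_of_le_of_lt (hsd ▸ h1) hincorrect) (lt_irrefl _)
  · simp only [List.concat_eq_append] at hcost hhead hlast hchain
    refine ⟨m, w, by simp, ?_⟩
    by_contra hw
    -- then w ∈ S
    have hwS : w ∈ S := by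
      have : w ∈ S ∪ F ∪ U := hinv.cover ▸ mem_univ w
      simp only [mem_union, not_or] at hw this
      tauto
    have hpne : m ++ [w] ≠ [] := by simp
    have hplast : (m ++ [w]).getLast? = some w := by simp
    -- split the chain
    have hsplit := List.isChain_append.mp hchain
    have hEwv : E w v := hsplit.2.2 w hplast v (by simp)
    have hchainp : (m ++ [w]).Chain' E := hsplit.1
    have hheadp : (m ++ [w]).head? = some s := by
      rcases m with _ | ⟨a, t⟩ <;> simpa using hhead
    have hpath_p : IsPath E s w (m ++ [w]) := ⟨hheadp, hplast, hchainp⟩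
    have hgw : gdist E c s w ≤ pathCost c (m ++ [w]) :=
      gdist_le_pathCost E c s w _ hpath_p
    have hdw : d w = gdist E c s w := hinv.settled w hwS
    obtain ⟨lw, ⟨⟨hwhead, hwlast, hwchain⟩, hwint⟩, hwcost⟩ := hinv.settledPath w hwS
    have hlwne : lw ≠ [] := by intro h; simp [h] at hwhead
    -- build the S-path lw ++ [v]
    have hlw_decomp : lw.dropLast ++ [w] = lw := by
      conv_rhs => rw [← List.dropLast_append_getLast hlwne]
      congr 1
      simpa [List.getLast?_eq_getLast hlwne] using hwlast.symm
    have hsp : IsSPath E S s v (lw ++ [v]) := by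
      refine ⟨⟨?_, by simp, ?_⟩, ?_⟩
      · obtain ⟨a, t, rfl⟩ := List.exists_cons_of_ne_nil hlwne
        simpa using hwhead
      · refine List.isChain_append.mpr ⟨hwchain, by simp, ?_⟩
        intro x hx y hy
        simp only [List.head?_cons, Option.mem_def, Option.some.injEq] at hy
        rw [Option.mem_def, hwlast] at hx
        obtain rfl := Option.some.injEq _ _ ▸ hx
        subst hy
        exact hEwv
      · intro x hx
        rw [List.dropLast_concat] at hx
        rcases mem_tail_of_getLast lw w hwlast x hx with h | rfl
        · exact hwint x h
        · exact hwS
    have hcost_sp : pathCost c (lw ++ [v]) = d w + c w v := by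
      rw [pathCost_append_single c lw w v hwlast, hwcost]
    have hcost_l : pathCost c (m ++ [w] ++ [v]) = pathCost c (m ++ [w]) + c w v :=
      pathCost_append_single c (m ++ [w]) w v hplast
    have h1 : sdist E c S s v ≤ d w + c w v := by
      rw [← hcost_sp]; exact sdist_le_pathCost E c S s v _ hsp
    have h2 : (d w : ℝ≥0∞) + c w v ≤ pathCost c (m ++ [w]) + c w v :=
      add_le_add_left (hdw ▸ hgw) _
    have h3 : sdist E c S s v ≤ gdist E c s v := by
      calc sdist E c S s v ≤ d w + c w v := h1
        _ ≤ pathCost c (m ++ [w]) + c w v := h2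
        _ = pathCost c (m ++ [w] ++ [v]) := hcost_l.symm
        _ = gdist E c s v := hcost
    exact absurd (lt_of_le_of_lt (hsd ▸ h3) hincorrect) (lt_irrefl _)
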